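/- For all parameters A, B, C ∈ ℂ with C ≠ 0 and (C;q)_n ≠ 0 for all n, and all x, y ∈ ℂ with |x| < 1 and |y| < 1, the bibasic Humbert function satisfies (1/C)(1−A)·Φ₁(qA,B;qC;q,q₁;x,y) = (1−A/C)·Φ₁(A,B;qC;q,q₁;qx,qy) + (1/C)(1−C)·Φ₁(A,B;C;q,q₁;x,y). (Equation (2.9), with A = q^a, C = q^c, so q^{−c} = 1/C and q^{a−c} = A/C.) -/

import Mathlib

open Complex

/-- The q-shifted factorial (z;q)_n = prod_{r=0}^{n-1} (1 - z q^r). -/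
noncomputable def qPoch (q z : ℂ) (n : ℕ) : ℂ :=
  ∏ r ∈ Finset.range n, (1 - z * q ^ r)

/-- The bibasic Humbert hypergeometric function Φ₁ on two independent bases q and q₁. -/
noncomputable def Phi1 (q q1 A B C x y : ℂ) : ℂ :=
  ∑' p : ℕ × ℕ,
    qPoch q A (p.1 + p.2) * qPoch q1 B p.1 /
      (qPoch q C (p.1 + p.2) * qPoch q1 q1 p.1 * qPoch q q p.2) * x ^ p.1 * y ^ p.2

/-- The Jackson p-derivative. -/
noncomputable def jackson (p : ℂ) (f : ℂ → ℂ) (x : ℂ) : ℂ :=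
  (f x - f (p * x)) / ((1 - p) * x)

/-! Both sides are absolutely convergent double series, so it suffices to compare coefficients.
Since `(1 - A) (qA;q)_n = (A;q)_n (1 - A qⁿ)` and likewise for `C`, every coefficient identity
reduces to `(1 - A/C) qⁿ + (1 - C qⁿ)/C = (1 - A qⁿ)/C`. Absolute convergence comes from the
fact that `(z;q)_n` converges to the infinite product `(z;q)_∞`, which is nonzero when no factor
vanishes: hence `(z;q)_n` and, for `z = C` or `z = q`, `1/(z;q)_n` are bounded in `n`. -/

open Filter Topology

section QPochhammer

variable {q : ℂ}

lemma qPoch_succ (q z : ℂ) (n : ℕ) : qPoch q z (n + 1) = qPoch q z n * (1 - z * q ^ n) :=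
  Finset.prod_range_succ _ _

lemma qPoch_succ' (q z : ℂ) (n : ℕ) : qPoch q z (n + 1) = (1 - z) * qPoch q (q * z) n := by
  simp only [qPoch, Finset.prod_range_succ', pow_succ]
  ring_nf

lemma qPoch_mul_ne_zero {z : ℂ} (hz : ∀ n, qPoch q z n ≠ 0) (n : ℕ) :
    qPoch q (q * z) n ≠ 0 :=
  right_ne_zero_of_mul (qPoch_succ' q z n ▸ hz (n + 1))

lemma qPoch_self_ne_zero (hq : ‖q‖ < 1) (n : ℕ) : qPoch q q n ≠ 0 := by
  refine Finset.prod_ne_zero_iff.2 fun r _ h => ?_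
  have : ‖q ^ (r + 1)‖ < 1 := by
    rw [norm_pow]
    exact pow_lt_one₀ (norm_nonneg q) hq r.succ_ne_zero
  rw [pow_succ', ← sub_eq_zero.1 h, norm_one] at this
  exact this.false

lemma summable_norm_neg_mul_pow (hq : ‖q‖ < 1) (z : ℂ) :
    Summable fun r : ℕ => ‖-(z * q ^ r)‖ := by
  simpa [norm_mul, norm_pow] using
    (summable_geometric_of_lt_one (norm_nonneg q) hq).mul_left ‖z‖

lemma tendsto_qPoch (hq : ‖q‖ < 1) (z : ℂ) :
    Tendsto (qPoch q z) atTop (𝓝 (∏' r, (1 - z * q ^ r))) := by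
  have h :=
    (multipliable_one_add_of_summable (summable_norm_neg_mul_pow hq z)).tendsto_prod_tprod_nat
  simp only [← sub_eq_add_neg] at h
  exact h

lemma tprod_one_sub_ne_zero (hq : ‖q‖ < 1) {z : ℂ} (hz : ∀ n, qPoch q z n ≠ 0) :
    ∏' r, (1 - z * q ^ r) ≠ 0 := by
  have hfactor (r : ℕ) : 1 + -(z * q ^ r) ≠ 0 := by
    rw [← sub_eq_add_neg]
    exact right_ne_zero_of_mul (qPoch_succ q z r ▸ hz (r + 1))
  simpa only [sub_eq_add_neg] using
    tprod_one_add_ne_zero_of_summable hfactor (summable_norm_neg_mul_pow hq z)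

lemma exists_norm_qPoch_le (hq : ‖q‖ < 1) (z : ℂ) : ∃ M > 0, ∀ n, ‖qPoch q z n‖ ≤ M := by
  obtain ⟨M, hM0, hM⟩ :=
    (Metric.isBounded_range_of_tendsto _ (tendsto_qPoch hq z)).exists_pos_norm_le
  exact ⟨M, hM0, fun n => hM _ (Set.mem_range_self n)⟩

lemma exists_norm_qPoch_inv_le (hq : ‖q‖ < 1) {z : ℂ} (hz : ∀ n, qPoch q z n ≠ 0) :
    ∃ M > 0, ∀ n, ‖(qPoch q z n)⁻¹‖ ≤ M := by
  obtain ⟨M, hM0, hM⟩ := (Metric.isBounded_range_of_tendsto _ <|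
    (tendsto_qPoch hq z).inv₀ (tprod_one_sub_ne_zero hq hz)).exists_pos_norm_le
  exact ⟨M, hM0, fun n => hM _ (Set.mem_range_self n)⟩

end QPochhammer

section Humbert

variable {q q1 : ℂ}

noncomputable def phi1Term (q q1 A B C x y : ℂ) (p : ℕ × ℕ) : ℂ :=
  qPoch q A (p.1 + p.2) * qPoch q1 B p.1 /
    (qPoch q C (p.1 + p.2) * qPoch q1 q1 p.1 * qPoch q q p.2) * x ^ p.1 * y ^ p.2

lemma phi1_eq_tsum (q q1 A B C x y : ℂ) : Phi1 q q1 A B C x y = ∑' p, phi1Term q q1 A B C x y p :=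
  rfl

lemma summable_phi1Term (hq : ‖q‖ < 1) (hq1 : ‖q1‖ < 1) (A B : ℂ) {C : ℂ}
    (hC : ∀ n, qPoch q C n ≠ 0) {x y : ℂ} (hx : ‖x‖ < 1) (hy : ‖y‖ < 1) :
    Summable (phi1Term q q1 A B C x y) := by
  obtain ⟨MA, hMA0, hMA⟩ := exists_norm_qPoch_le hq A
  obtain ⟨MB, hMB0, hMB⟩ := exists_norm_qPoch_le hq1 B
  obtain ⟨MC, hMC0, hMC⟩ := exists_norm_qPoch_inv_le hq hC
  obtain ⟨M1, hM10, hM1⟩ := exists_norm_qPoch_inv_le hq1 (qPoch_self_ne_zero hq1)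
  obtain ⟨M, hM0, hM⟩ := exists_norm_qPoch_inv_le hq (qPoch_self_ne_zero hq)
  have hgeom : Summable fun p : ℕ × ℕ => ‖x‖ ^ p.1 * ‖y‖ ^ p.2 :=
    (summable_geometric_of_lt_one (norm_nonneg x) hx).mul_of_nonneg
      (summable_geometric_of_lt_one (norm_nonneg y) hy)
      (fun _ => by positivity) (fun _ => by positivity)
  refine (hgeom.mul_left (MA * MB * MC * M1 * M)).of_norm_bounded fun ⟨l, k⟩ => ?_
  calc ‖phi1Term q q1 A B C x y (l, k)‖
      = ‖qPoch q A (l + k)‖ * ‖qPoch q1 B l‖ * ‖(qPoch q C (l + k))⁻¹‖ *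
          ‖(qPoch q1 q1 l)⁻¹‖ * ‖(qPoch q q k)⁻¹‖ * (‖x‖ ^ l * ‖y‖ ^ k) := by
        simp only [phi1Term, norm_mul, norm_div, norm_inv, norm_pow]
        ring
    _ ≤ MA * MB * MC * M1 * M * (‖x‖ ^ l * ‖y‖ ^ k) := by
        gcongr
        exacts [hMA _, hMB _, hMC _, hM1 _, hM _]

lemma qPoch_contiguous_coeff {A C : ℂ} {n : ℕ} (hC0 : C ≠ 0) (hC : qPoch q C (n + 1) ≠ 0) :
    (1 / C) * (1 - A) * (qPoch q (q * A) n / qPoch q (q * C) n) =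
      (1 - A / C) * (qPoch q A n / qPoch q (q * C) n) * q ^ n
        + (1 / C) * (1 - C) * (qPoch q A n / qPoch q C n) := by
  have hCn : qPoch q C n ≠ 0 := left_ne_zero_of_mul (qPoch_succ q C n ▸ hC)
  have hqCn : qPoch q (q * C) n ≠ 0 := right_ne_zero_of_mul (qPoch_succ' q C n ▸ hC)
  have hA : (1 - A) * qPoch q (q * A) n = qPoch q A n * (1 - A * q ^ n) := by
    rw [← qPoch_succ', qPoch_succ]
  have hC' : (1 - C) * qPoch q (q * C) n = qPoch q C n * (1 - C * q ^ n) := by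
    rw [← qPoch_succ', qPoch_succ]
  generalize qPoch q A n = a, qPoch q (q * A) n = a', qPoch q C n = c, qPoch q (q * C) n = c'
    at hCn hqCn hA hC' ⊢
  field_simp
  linear_combination c * hA - a * hC'

lemma phi1Term_contiguous {A B C : ℂ} (hC0 : C ≠ 0) (hC : ∀ n, qPoch q C n ≠ 0) (x y : ℂ)
    (p : ℕ × ℕ) :
    (1 / C) * (1 - A) * phi1Term q q1 (q * A) B (q * C) x y p =
      (1 - A / C) * phi1Term q q1 A B (q * C) (q * x) (q * y) p
        + (1 / C) * (1 - C) * phi1Term q q1 A B C x y p := by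
  obtain ⟨l, k⟩ := p
  simp only [phi1Term]
  linear_combination (qPoch q1 B l / (qPoch q1 q1 l * qPoch q q k) * x ^ l * y ^ k) *
    qPoch_contiguous_coeff (A := A) (n := l + k) hC0 (hC _)

end Humbert

theorem stmt8_general (q q1 A B C x y : ℂ)
    (hq1 : ‖q‖ < 1)
    (hq11 : ‖q1‖ < 1)
    (hC : ∀ n : ℕ, qPoch q C n ≠ 0)
    (hC0 : C ≠ 0) (hx : ‖x‖ < 1) (hy : ‖y‖ < 1) :
    (1 / C) * (1 - A) * Phi1 q q1 (q * A) B (q * C) x y =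
      (1 - A / C) * Phi1 q q1 A B (q * C) (q * x) (q * y)
        + (1 / C) * (1 - C) * Phi1 q q1 A B C x y := by
  have hnorm_mul {w : ℂ} (hw : ‖w‖ < 1) : ‖q * w‖ < 1 :=
    (norm_mul_le _ _).trans_lt (mul_lt_one_of_nonneg_of_lt_one_left (norm_nonneg q) hq1 hw.le)
  have hsum_shifted := summable_phi1Term hq1 hq11 A B (qPoch_mul_ne_zero hC) (hnorm_mul hx)
    (hnorm_mul hy)
  have hsum := summable_phi1Term (q1 := q1) hq1 hq11 A B hC hx hy
  simp only [phi1_eq_tsum, ← tsum_mul_left]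
  rw [← (hsum_shifted.mul_left _).tsum_add (hsum.mul_left _)]
  exact tsum_congr (phi1Term_contiguous hC0 hC x y)

theorem stmt8 (q q1 A B C x y : ℂ)
    (hq0 : 0 < ‖q‖) (hq1 : ‖q‖ < 1)
    (hq10 : 0 < ‖q1‖) (hq11 : ‖q1‖ < 1)
    (hC : ∀ n : ℕ, qPoch q C n ≠ 0)
    (hC0 : C ≠ 0) (hx : ‖x‖ < 1) (hy : ‖y‖ < 1) :
    (1 / C) * (1 - A) * Phi1 q q1 (q * A) B (q * C) x y =
      (1 - A / C) * Phi1 q q1 A B (q * C) (q * x) (q * y)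
        + (1 / C) * (1 - C) * Phi1 q q1 A B C x y :=
  stmt8_general q q1 A B C x y hq1 hq11 hC hC0 hx hy
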